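/- Let (P₁,P₂,P₃,P₄) be nonzero null vectors in ℂ^{n,1}, pairwise linearly independent, with normalized Gram matrix G = (g_{ij}). Then X₁ = conj(g₁₃)·conj(g₂₄)/conj(g₁₄), X₂ = 1/conj(g₁₄), X₃ = 1/(g₁₃·conj(g₂₄)); and conversely g₁₃ = −e^{−i𝔸}, g₁₄ = 1/conj(X₂), g₂₄ = −(conj(X₁)/conj(X₂))·e^{i𝔸}, where 𝔸 = 𝔸(p₁,p₂,p₃). -/

import Mathlib

/-!
Rescaling each `P i` by `conj (d i)` turns the Gram matrix of `P` into `(diagonal d)ᴴ * gram P * diagonal d`,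
so the normalized Gram matrix is itself the Gram matrix of a rescaled quadruple `Q`. Cross-ratios and the
Cartan invariant do not change under rescaling, and for `Q` they are read off the Gram entries directly,
using `⟨Q₀,Q₁⟩ = ⟨Q₁,Q₂⟩ = ⟨Q₂,Q₃⟩ = 1`. Since `|g₁₃| = 1`, the Cartan invariant `arg (-conj g₁₃)`
determines `g₁₃`. The only non-algebraic input is `g₁₄ ≠ 0`: two independent null vectors are never
orthogonal, because a form of signature `(n,1)` has no totally isotropic plane.
-/

open Complex Matrix
open scoped ComplexConjugate

noncomputable section

/-- The Hermitian form of signature `(n,1)` on `ℂ^{n+1}`: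
`⟨Z,W⟩ = Z₁·conj W_{n+1} + Z₂·conj W₂ + ⋯ + Z_n·conj W_n + Z_{n+1}·conj W₁`. -/
def herm {n : ℕ} (Z W : Fin (n + 1) → ℂ) : ℂ :=
  Z 0 * conj (W (Fin.last n)) + Z (Fin.last n) * conj (W 0) +
    ∑ i ∈ Finset.univ.filter (fun i : Fin (n + 1) => i ≠ 0 ∧ i ≠ Fin.last n),
      Z i * conj (W i)

/-- The Gram matrix of a quadruple of vectors. -/
def gram {n : ℕ} (P : Fin 4 → Fin (n + 1) → ℂ) : Matrix (Fin 4) (Fin 4) ℂ :=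
  fun i j => herm (P i) (P j)

/-- A quadruple of nonzero null vectors, pairwise linearly independent. -/
def IsNullQuadruple {n : ℕ} (P : Fin 4 → Fin (n + 1) → ℂ) : Prop :=
  (∀ i, P i ≠ 0) ∧ (∀ i, herm (P i) (P i) = 0) ∧
    ∀ i j, i ≠ j → LinearIndependent ℂ ![P i, P j]

/-- The Korányi–Reimann complex cross-ratio. -/
def crossRatio {n : ℕ} (P₁ P₂ P₃ P₄ : Fin (n + 1) → ℂ) : ℂ :=
  (herm P₃ P₁ * herm P₄ P₂) / (herm P₄ P₁ * herm P₃ P₂)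

/-- Cartan's angular invariant. -/
def cartan {n : ℕ} (P₁ P₂ P₃ : Fin (n + 1) → ℂ) : ℝ :=
  (-(herm P₁ P₂ * herm P₂ P₃ * herm P₃ P₁)).arg

/-- `G` is the normalized Gram matrix of the quadruple `P`. -/
def IsNormalizedGram {n : ℕ} (P : Fin 4 → Fin (n + 1) → ℂ)
    (G : Matrix (Fin 4) (Fin 4) ℂ) : Prop :=
  (∃ d : Fin 4 → ℂ, (∀ i, d i ≠ 0) ∧
      G = (Matrix.diagonal d)ᴴ * gram P * Matrix.diagonal d) ∧
    G 0 1 = 1 ∧ G 1 2 = 1 ∧ G 2 3 = 1 ∧ ‖G 0 2‖ = 1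

/-- Two quadruples are congruent if a linear map preserving the Hermitian form
sends one to the other up to nonzero scalars. -/
def QuadCongruent {n : ℕ} (P P' : Fin 4 → Fin (n + 1) → ℂ) : Prop :=
  ∃ A : (Fin (n + 1) → ℂ) →ₗ[ℂ] (Fin (n + 1) → ℂ),
    (∀ Z W, herm (A Z) (A W) = herm Z W) ∧
    ∃ lam : Fin 4 → ℂ, (∀ i, lam i ≠ 0) ∧ ∀ i, A (P i) = lam i • P' i


section Herm

variable {n : ℕ}

lemma herm_conj_symm (Z W : Fin (n + 1) → ℂ) : herm W Z = conj (herm Z W) := by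
  simp only [herm, map_add, _root_.map_mul, map_sum, conj_conj]
  ring_nf
  exact congrArg₂ (· + ·) rfl (Finset.sum_congr rfl fun i _ => mul_comm _ _)

lemma herm_smul_left (a : ℂ) (Z W : Fin (n + 1) → ℂ) : herm (a • Z) W = a * herm Z W := by
  simp only [herm, Pi.smul_apply, smul_eq_mul, mul_add, Finset.mul_sum, mul_assoc]

lemma herm_smul_right (a : ℂ) (Z W : Fin (n + 1) → ℂ) :
    herm Z (a • W) = conj a * herm Z W := by
  rw [herm_conj_symm, herm_smul_left, _root_.map_mul, ← herm_conj_symm]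

lemma herm_sub_left (Z Z' W : Fin (n + 1) → ℂ) : herm (Z - Z') W = herm Z W - herm Z' W := by
  simp only [herm, Pi.sub_apply, sub_mul, Finset.sum_sub_distrib]
  ring

lemma herm_sub_right (Z W W' : Fin (n + 1) → ℂ) : herm Z (W - W') = herm Z W - herm Z W' := by
  rw [herm_conj_symm, herm_sub_left, map_sub, ← herm_conj_symm, ← herm_conj_symm]

lemma eq_zero_of_herm_self_eq_zero {Z : Fin (n + 1) → ℂ} (h0 : Z 0 = Z (Fin.last n))
    (h : herm Z Z = 0) : Z = 0 := by
  set S := Finset.univ.filter (fun i : Fin (n + 1) => i ≠ 0 ∧ i ≠ Fin.last n)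
  have hreal : normSq (Z (Fin.last n)) + normSq (Z (Fin.last n)) + ∑ i ∈ S, normSq (Z i) = 0 := by
    rw [herm, h0] at h
    simp only [mul_conj] at h
    exact_mod_cast h
  have hS : 0 ≤ ∑ i ∈ S, normSq (Z i) := Finset.sum_nonneg fun i _ => normSq_nonneg _
  have hlast : normSq (Z (Fin.last n)) = 0 := by nlinarith [normSq_nonneg (Z (Fin.last n))]
  have hmid := (Finset.sum_eq_zero_iff_of_nonneg fun i _ => normSq_nonneg (Z i)).mp
    (by linarith : ∑ i ∈ S, normSq (Z i) = 0)
  funext i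
  by_cases hi0 : i = 0
  · rw [hi0, h0]; exact normSq_eq_zero.mp hlast
  by_cases hil : i = Fin.last n
  · rw [hil]; exact normSq_eq_zero.mp hlast
  · exact normSq_eq_zero.mp (hmid i (Finset.mem_filter.mpr ⟨Finset.mem_univ _, hi0, hil⟩))

lemma herm_ne_zero_of_linearIndependent {Z W : Fin (n + 1) → ℂ}
    (hZ : herm Z Z = 0) (hW : herm W W = 0) (hind : LinearIndependent ℂ ![Z, W]) :
    herm Z W ≠ 0 := by
  intro h
  have hWZ : herm W Z = 0 := by rw [herm_conj_symm, h, map_zero]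
  -- a combination of `Z` and `W` in the hyperplane `R₁ = R_{n+1}`, where the form is definite
  set s := W 0 - W (Fin.last n)
  set t := Z 0 - Z (Fin.last n)
  have hnull : herm (s • Z - t • W) (s • Z - t • W) = 0 := by
    simp only [herm_sub_left, herm_sub_right, herm_smul_left, herm_smul_right, hZ, hW, h, hWZ]
    ring
  have hplane : (s • Z - t • W) 0 = (s • Z - t • W) (Fin.last n) := by
    simp only [Pi.sub_apply, Pi.smul_apply, smul_eq_mul, s, t]; ring
  obtain ⟨-, ht⟩ := LinearIndependent.pair_iff.mp hind s (-t) (by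
    rw [neg_smul, ← sub_eq_add_neg]; exact eq_zero_of_herm_self_eq_zero hplane hnull)
  have hZ0 : Z 0 = Z (Fin.last n) := sub_eq_zero.mp (neg_eq_zero.mp ht)
  exact hind.ne_zero 0 (by simpa using eq_zero_of_herm_self_eq_zero hZ0 hZ)

end Herm

section Invariance

variable {n : ℕ}

lemma conjTranspose_diagonal_mul_gram_mul_diagonal (d : Fin 4 → ℂ) (P : Fin 4 → Fin (n + 1) → ℂ) :
    (diagonal d)ᴴ * gram P * diagonal d = gram fun i => conj (d i) • P i := by
  ext i j
  simp only [diagonal_conjTranspose, mul_diagonal, diagonal_mul, Pi.star_apply, RCLike.star_def,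
    _root_.gram, herm_smul_left, herm_smul_right, conj_conj]
  ring

lemma crossRatio_smul {a b c e : ℂ} (ha : a ≠ 0) (hb : b ≠ 0) (hc : c ≠ 0) (he : e ≠ 0)
    (P₁ P₂ P₃ P₄ : Fin (n + 1) → ℂ) :
    crossRatio (a • P₁) (b • P₂) (c • P₃) (e • P₄) = crossRatio P₁ P₂ P₃ P₄ := by
  have hk : c * conj a * (e * conj b) ≠ 0 := by simp [ha, hb, hc, he]
  simp only [crossRatio, herm_smul_left, herm_smul_right]
  rw [← mul_div_mul_left (herm P₃ P₁ * herm P₄ P₂) _ hk]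
  congr 1 <;> ring

lemma cartan_smul {a b c : ℂ} (ha : a ≠ 0) (hb : b ≠ 0) (hc : c ≠ 0)
    (P₁ P₂ P₃ : Fin (n + 1) → ℂ) :
    cartan (a • P₁) (b • P₂) (c • P₃) = cartan P₁ P₂ P₃ := by
  have hr : 0 < normSq a * normSq b * normSq c :=
    mul_pos (mul_pos (normSq_pos.mpr ha) (normSq_pos.mpr hb)) (normSq_pos.mpr hc)
  rw [cartan, cartan]
  conv_rhs => rw [← arg_real_mul _ hr]
  simp only [herm_smul_left, herm_smul_right]
  push_cast
  rw [← mul_conj, ← mul_conj, ← mul_conj]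
  ring_nf

end Invariance

lemma Complex.exp_arg_neg_conj_mul_I {z : ℂ} (hz : ‖z‖ = 1) :
    exp (I * arg (-conj z)) = -conj z := by
  have h := norm_mul_exp_arg_mul_I (-conj z)
  rwa [norm_neg, norm_conj, hz, ofReal_one, one_mul, mul_comm] at h

lemma Complex.eq_neg_exp_neg_arg_neg_conj {z : ℂ} (hz : ‖z‖ = 1) :
    z = -exp (-(I * arg (-conj z))) := by
  have h := congrArg conj (exp_arg_neg_conj_mul_I hz)
  rw [← exp_conj] at h
  simp only [_root_.map_mul, map_neg, conj_conj, conj_ofReal, conj_I] at h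
  rw [show -(I * (arg (-conj z) : ℂ)) = -I * arg (-conj z) by ring, h, neg_neg]

section Normalized

variable {n : ℕ} (Q : Fin 4 → Fin (n + 1) → ℂ)

lemma crossRatio_eq_of_normalized (h01 : herm (Q 0) (Q 1) = 1) (h12 : herm (Q 1) (Q 2) = 1)
    (h23 : herm (Q 2) (Q 3) = 1) :
    crossRatio (Q 0) (Q 1) (Q 2) (Q 3) =
        conj (herm (Q 0) (Q 2)) * conj (herm (Q 1) (Q 3)) / conj (herm (Q 0) (Q 3)) ∧
      crossRatio (Q 0) (Q 2) (Q 1) (Q 3) = 1 / conj (herm (Q 0) (Q 3)) ∧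
      crossRatio (Q 1) (Q 2) (Q 0) (Q 3) = 1 / (herm (Q 0) (Q 2) * conj (herm (Q 1) (Q 3))) := by
  simp only [crossRatio, herm_conj_symm (Q 0) (Q 1), herm_conj_symm (Q 0) (Q 2),
    herm_conj_symm (Q 0) (Q 3), herm_conj_symm (Q 1) (Q 2), herm_conj_symm (Q 1) (Q 3),
    herm_conj_symm (Q 2) (Q 3), h01, h12, h23, map_one]
  refine ⟨by ring, by ring, by ring⟩

lemma cartan_eq_of_normalized (h01 : herm (Q 0) (Q 1) = 1) (h12 : herm (Q 1) (Q 2) = 1) :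
    cartan (Q 0) (Q 1) (Q 2) = arg (-conj (herm (Q 0) (Q 2))) := by
  rw [cartan, h01, h12, herm_conj_symm (Q 0) (Q 2), one_mul, one_mul]

lemma herm_one_three_eq_of_normalized (h01 : herm (Q 0) (Q 1) = 1) (h12 : herm (Q 1) (Q 2) = 1)
    (h23 : herm (Q 2) (Q 3) = 1) (h02 : ‖herm (Q 0) (Q 2)‖ = 1) (h03 : herm (Q 0) (Q 3) ≠ 0) :
    herm (Q 1) (Q 3) = -(conj (crossRatio (Q 0) (Q 1) (Q 2) (Q 3)) /
      conj (crossRatio (Q 0) (Q 2) (Q 1) (Q 3))) * exp (I * cartan (Q 0) (Q 1) (Q 2)) := by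
  obtain ⟨hX₁, hX₂, -⟩ := crossRatio_eq_of_normalized Q h01 h12 h23
  have hunit : herm (Q 0) (Q 2) * conj (herm (Q 0) (Q 2)) = 1 := by
    rw [mul_conj, normSq_eq_norm_sq, h02]; norm_num
  rw [hX₁, hX₂, cartan_eq_of_normalized Q h01 h12, exp_arg_neg_conj_mul_I h02]
  simp only [map_div₀, map_one, _root_.map_mul, conj_conj]
  field_simp
  linear_combination -(herm (Q 1) (Q 3)) * hunit

end Normalized

/-- cross-ratios in terms of the normalized Gram matrix, and
conversely the normalized Gram entries in terms of `X₁, X₂, 𝔸`. -/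
theorem stmt4 (n : ℕ) (P : Fin 4 → Fin (n + 1) → ℂ) (hP : IsNullQuadruple P)
    (G : Matrix (Fin 4) (Fin 4) ℂ) (hG : IsNormalizedGram P G)
    (X₁ X₂ X₃ : ℂ) (A : ℝ)
    (hX₁ : X₁ = crossRatio (P 0) (P 1) (P 2) (P 3))
    (hX₂ : X₂ = crossRatio (P 0) (P 2) (P 1) (P 3))
    (hX₃ : X₃ = crossRatio (P 1) (P 2) (P 0) (P 3))
    (hA : A = cartan (P 0) (P 1) (P 2)) :
    X₁ = conj (G 0 2) * conj (G 1 3) / conj (G 0 3) ∧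
    X₂ = 1 / conj (G 0 3) ∧
    X₃ = 1 / (G 0 2 * conj (G 1 3)) ∧
    G 0 2 = -Complex.exp (-(Complex.I * (A : ℂ))) ∧
    G 0 3 = 1 / conj X₂ ∧
    G 1 3 = -(conj X₁ / conj X₂) * Complex.exp (Complex.I * (A : ℂ)) := by
  obtain ⟨-, hnull, hli⟩ := hP
  obtain ⟨⟨d, hd, rfl⟩, h01, h12, h23, h02⟩ := hG
  have hd' : ∀ i, conj (d i) ≠ 0 := fun i => (map_ne_zero _).mpr (hd i)
  rw [conjTranspose_diagonal_mul_gram_mul_diagonal] at h01 h12 h23 h02 ⊢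
  rw [← crossRatio_smul (hd' 0) (hd' 1) (hd' 2) (hd' 3)] at hX₁
  rw [← crossRatio_smul (hd' 0) (hd' 2) (hd' 1) (hd' 3)] at hX₂
  rw [← crossRatio_smul (hd' 1) (hd' 2) (hd' 0) (hd' 3)] at hX₃
  rw [← cartan_smul (hd' 0) (hd' 1) (hd' 2)] at hA
  set Q : Fin 4 → Fin (n + 1) → ℂ := fun i => conj (d i) • P i
  simp only [_root_.gram] at h01 h12 h23 h02 ⊢
  have h03 : herm (Q 0) (Q 3) ≠ 0 := by
    simpa [Q, herm_smul_left, herm_smul_right, hd] using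
      herm_ne_zero_of_linearIndependent (hnull 0) (hnull 3) (hli 0 3 (by decide))
  obtain ⟨hQ₁, hQ₂, hQ₃⟩ := crossRatio_eq_of_normalized Q h01 h12 h23
  have hA' : A = arg (-conj (herm (Q 0) (Q 2))) := hA.trans (cartan_eq_of_normalized Q h01 h12)
  refine ⟨hX₁.trans hQ₁, hX₂.trans hQ₂, hX₃.trans hQ₃, ?_, ?_, ?_⟩
  · rw [hA']
    exact eq_neg_exp_neg_arg_neg_conj h02
  · rw [hX₂.trans hQ₂]
    simp
  · rw [hX₁, hX₂, hA]
    exact herm_one_three_eq_of_normalized Q h01 h12 h23 h02 h03
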